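/- For a vector ψ ∈ ℝ^d with nonnegative entries sorted in nonincreasing order, and integer 1 ≤ m ≤ d, the m-distillation norm is given by the closed formula ‖ψ‖_{[m]} = Σ_{i=1}^{m−k*} ψ_i + √(k*) · (Σ_{i=m−k*+1}^{d} ψ_i²)^{1/2}, where k* is a minimizer over 1 ≤ k ≤ m of (1/√k)(Σ_{i=m−k+1}^{d} ψ_i²)^{1/2}. -/

import Mathlib

open Matrix BigOperators Complex ComplexOrder

noncomputable section

variable {ι : Type*} [Fintype ι] [DecidableEq ι]

/-- A density matrix: positive semidefinite with unit trace. -/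
def IsDensityMatrix (ρ : Matrix ι ι ℂ) : Prop := ρ.PosSemidef ∧ ρ.trace = 1

/-- The rank-one projector |ψ⟩⟨ψ| associated to a vector. -/
def pureState (ψ : ι → ℂ) : Matrix ι ι ℂ := Matrix.of fun i j => ψ i * (starRingEnd ℂ) (ψ j)

/-- Square root of a PSD matrix (the former `Matrix.PosSemidef.sqrt`). -/
def psdSqrt {A : Matrix ι ι ℂ} (hA : A.PosSemidef) : Matrix ι ι ℂ :=
  hA.1.eigenvectorUnitary.1 * diagonal ((↑) ∘ (√·) ∘ hA.1.eigenvalues) *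
    (star hA.1.eigenvectorUnitary : Matrix ι ι ℂ)

/-- The trace norm ‖A‖₁ = Tr √(AᴴA). -/
def traceNorm (A : Matrix ι ι ℂ) : ℝ :=
  ((psdSqrt (Matrix.posSemidef_conjTranspose_mul_self A)).trace).re

open Classical in
/-- Matrix square root (junk value 0 on matrices that are not PSD). -/
def matSqrt (A : Matrix ι ι ℂ) : Matrix ι ι ℂ := if h : A.PosSemidef then psdSqrt h else 0

/-- Fidelity F(ρ,σ) = ‖√ρ√σ‖₁². -/
def fidelity (ρ σ : Matrix ι ι ℂ) : ℝ := (traceNorm (matSqrt ρ * matSqrt σ))^2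

/-- The dephasing map Δ, keeping only the diagonal. -/
def deph (ρ : Matrix ι ι ℂ) : Matrix ι ι ℂ := Matrix.diagonal (fun i => ρ i i)

/-- The m-distillation norm ‖ψ‖_{[m]} = min_x (‖ψ-x‖₁ + √m ‖x‖₂). -/
def distNorm (m : ℕ) (ψ : ι → ℂ) : ℝ :=
  ⨅ x : ι → ℂ, ((∑ i, ‖ψ i - x i‖) +
    Real.sqrt m * Real.sqrt (∑ i, (‖x i‖)^2))

/-- M_m: convex combinations of pure states with ℓ∞ norm at most 1/√m. -/
def Mset (m : ℕ) : Set (Matrix ι ι ℂ) :=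
  {ω | ∃ (n : ℕ) (p : Fin n → ℝ) (ψ : Fin n → ι → ℂ),
    (∀ i, 0 ≤ p i) ∧ (∑ i, p i = 1) ∧
    (∀ i, ∑ j, (‖ψ i j‖)^2 = 1) ∧
    (∀ i j, ‖ψ i j‖ ≤ 1 / Real.sqrt m) ∧
    ω = ∑ i, p i • pureState (ψ i)}

/-- N_m: density matrices with all diagonal entries at most 1/m. -/
def Nset (m : ℕ) : Set (Matrix ι ι ℂ) :=
  {ω | IsDensityMatrix ω ∧ ∀ i, (ω i i).re ≤ 1 / m}

/-- Optimal fidelity of assisted distillation F_A(ρ,m) = max_{ω ∈ M_m} F(ρ,ω). -/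
def FA (ρ : Matrix ι ι ℂ) (m : ℕ) : ℝ :=
  sSup {r : ℝ | ∃ ω ∈ Mset (ι := ι) m, r = fidelity ρ ω}



end

/-!
Any `ω` with `‖ω‖_∞ ≤ 1` and `‖ω‖₂ ≤ √m` gives the lower bound `⟨ω, ψ⟩ ≤ ‖ψ - x‖₁ + √m ‖x‖₂`
(Hölder plus Cauchy–Schwarz). Put `c = m - k*`, `T = (∑_{i>c} ψ_i²)^{1/2}` and `τ = T / √k*`.
Comparing `k*` with `k* ± 1`, minimality says that `τ` separates the head from the tail:
`ψ_i ≥ τ` for `i ≤ c` and `ψ_i ≤ τ` for `i > c`. Clipping the head of `ψ` at height `τ` gives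
a primal `x`, and `ω = 1` on the head, `ψ / τ` on the tail gives a dual vector; both have the
value `∑_{i ≤ c} ψ_i + √k* T`.
-/

section Duality

variable {ι : Type*} [Fintype ι]

noncomputable def distObjective (m : ℕ) (ψ x : ι → ℂ) : ℝ :=
  (∑ i, ‖ψ i - x i‖) + Real.sqrt m * Real.sqrt (∑ i, (‖x i‖)^2)

lemma distObjective_nonneg (m : ℕ) (ψ x : ι → ℂ) : 0 ≤ distObjective m ψ x := by
  unfold distObjective; positivity

lemma distNorm_le_distObjective (m : ℕ) (ψ x : ι → ℂ) :
    distNorm m ψ ≤ distObjective m ψ x :=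
  ciInf_le ⟨0, by rintro _ ⟨y, rfl⟩; exact distObjective_nonneg m ψ y⟩ x

lemma sum_mul_re_le_distObjective {m : ℕ} {ω : ι → ℝ} (hω : ∀ i, |ω i| ≤ 1)
    (hω₂ : ∑ i, ω i ^ 2 ≤ m) (ψ x : ι → ℂ) :
    ∑ i, ω i * (ψ i).re ≤ distObjective m ψ x := by
  have hℓ₁ : ∑ i, ω i * (ψ i - x i).re ≤ ∑ i, ‖ψ i - x i‖ := by
    refine Finset.sum_le_sum fun i _ => ?_
    calc ω i * (ψ i - x i).re ≤ |ω i| * |(ψ i - x i).re| := by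
          rw [← abs_mul]; exact le_abs_self _
      _ ≤ 1 * ‖ψ i - x i‖ :=
          mul_le_mul (hω i) (Complex.abs_re_le_norm _) (abs_nonneg _) zero_le_one
      _ = ‖ψ i - x i‖ := one_mul _
  have hℓ₂ : ∑ i, ω i * (x i).re ≤ Real.sqrt m * Real.sqrt (∑ i, (‖x i‖)^2) :=
    calc ∑ i, ω i * (x i).re
        ≤ Real.sqrt (∑ i, ω i ^ 2) * Real.sqrt (∑ i, (x i).re ^ 2) :=
          Real.sum_mul_le_sqrt_mul_sqrt _ _ _
      _ ≤ Real.sqrt m * Real.sqrt (∑ i, (‖x i‖)^2) := by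
          refine mul_le_mul_of_nonneg (Real.sqrt_le_sqrt hω₂) (Real.sqrt_le_sqrt ?_)
            (Real.sqrt_nonneg _) (Real.sqrt_nonneg _)
          exact Finset.sum_le_sum fun i _ =>
            sq_le_sq' (neg_le_of_abs_le (Complex.abs_re_le_norm _)) (Complex.re_le_norm _)
  have hsplit : ∑ i, ω i * (ψ i).re = ∑ i, ω i * (ψ i - x i).re + ∑ i, ω i * (x i).re := by
    rw [← Finset.sum_add_distrib]
    exact Finset.sum_congr rfl fun i _ => by simp only [Complex.sub_re]; ring
  unfold distObjective
  linarith

lemma sum_mul_re_le_distNorm {m : ℕ} {ω : ι → ℝ} (hω : ∀ i, |ω i| ≤ 1)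
    (hω₂ : ∑ i, ω i ^ 2 ≤ m) (ψ : ι → ℂ) :
    ∑ i, ω i * (ψ i).re ≤ distNorm m ψ :=
  le_ciInf (sum_mul_re_le_distObjective hω hω₂ ψ)

end Duality

section Threshold

variable {ι : Type*} [Fintype ι] [DecidableEq ι]

lemma sum_eq_sum_add_sum_compl {M : Type*} [AddCommMonoid M] (s : Finset ι) {f g h : ι → M}
    (hg : ∀ i ∈ s, f i = g i) (hh : ∀ i ∉ s, f i = h i) :
    ∑ i, f i = ∑ i ∈ s, g i + ∑ i ∈ sᶜ, h i := by
  rw [← Finset.sum_add_sum_compl s f, Finset.sum_congr rfl hg,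
    Finset.sum_congr rfl fun i hi => hh i (Finset.mem_compl.mp hi)]

variable {ψ : ι → ℝ} {s : Finset ι} {k m : ℕ}

lemma distNorm_le_of_head_threshold (hk : 0 < k) (hm : s.card + k = m)
    (hψ : ∀ i ∈ s, 0 ≤ ψ i) (hhead : ∀ i ∈ s, ∑ j ∈ sᶜ, ψ j ^ 2 ≤ k * ψ i ^ 2) :
    distNorm m (fun i => (ψ i : ℂ)) ≤
      ∑ i ∈ s, ψ i + Real.sqrt k * Real.sqrt (∑ i ∈ sᶜ, ψ i ^ 2) := by
  subst hm
  set T := Real.sqrt (∑ i ∈ sᶜ, ψ i ^ 2)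
  have hsqrtk : 0 < Real.sqrt k := Real.sqrt_pos.mpr (Nat.cast_pos.mpr hk)
  set τ := T / Real.sqrt k
  have hτ : 0 ≤ τ := by positivity
  have hkτ : (k : ℝ) * τ ^ 2 = ∑ i ∈ sᶜ, ψ i ^ 2 := by
    rw [div_pow, Real.sq_sqrt (Nat.cast_nonneg k), Real.sq_sqrt (by positivity)]
    field_simp
  have hτ_le : ∀ i ∈ s, τ ≤ ψ i := fun i hi => by
    rw [div_le_iff₀ hsqrtk, Real.sqrt_le_left (mul_nonneg (hψ i hi) hsqrtk.le), mul_pow,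
      Real.sq_sqrt (Nat.cast_nonneg k), mul_comm]
    exact hhead i hi
  -- the primal optimizer: `ψ` clipped from above at the level `τ`
  let x : ι → ℂ := fun i => if i ∈ s then (τ : ℂ) else ψ i
  have hℓ₁ : ∑ i, ‖(ψ i : ℂ) - x i‖ = ∑ i ∈ s, ψ i - s.card * τ := by
    rw [sum_eq_sum_add_sum_compl s (g := fun i => ψ i - τ) (h := 0)
      (fun i hi => ?_) (fun i hi => by simp [x, hi])]
    · simp [Finset.sum_sub_distrib]
    · simp only [x, if_pos hi, ← Complex.ofReal_sub, Complex.norm_real, Real.norm_eq_abs]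
      exact abs_of_nonneg (sub_nonneg.mpr (hτ_le i hi))
  have hℓ₂ : ∑ i, ‖x i‖ ^ 2 = ((s.card + k : ℕ) : ℝ) * τ ^ 2 := by
    rw [sum_eq_sum_add_sum_compl s (g := fun _ => τ ^ 2) (h := fun i => ψ i ^ 2)
      (fun i hi => by simp [x, hi, sq_abs]) (fun i hi => by simp [x, hi, sq_abs]), ← hkτ]
    simp only [Finset.sum_const, nsmul_eq_mul, Nat.cast_add]
    ring
  calc distNorm (s.card + k) (fun i => (ψ i : ℂ))
      ≤ distObjective (s.card + k) (fun i => (ψ i : ℂ)) x := distNorm_le_distObjective _ _ _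
    _ = ∑ i ∈ s, ψ i - s.card * τ + (s.card + k) * τ := by
      rw [distObjective, hℓ₁, hℓ₂, Real.sqrt_mul (Nat.cast_nonneg _), Real.sqrt_sq hτ,
        ← mul_assoc, Real.mul_self_sqrt (Nat.cast_nonneg _), Nat.cast_add]
    _ = ∑ i ∈ s, ψ i + Real.sqrt k * T := by
      have : (k : ℝ) * τ = Real.sqrt k * T := by
        simp only [τ]
        field_simp
        rw [Real.sq_sqrt (Nat.cast_nonneg k), mul_comm]
      linear_combination this

lemma le_distNorm_of_tail_threshold (hm : s.card + k = m)
    (htail : ∀ i ∉ s, k * ψ i ^ 2 ≤ ∑ j ∈ sᶜ, ψ j ^ 2) :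
    ∑ i ∈ s, ψ i + Real.sqrt k * Real.sqrt (∑ i ∈ sᶜ, ψ i ^ 2) ≤
      distNorm m (fun i => (ψ i : ℂ)) := by
  set T := Real.sqrt (∑ i ∈ sᶜ, ψ i ^ 2)
  have hT : 0 ≤ T := Real.sqrt_nonneg _
  have hT2 : T ^ 2 = ∑ i ∈ sᶜ, ψ i ^ 2 := Real.sq_sqrt (Finset.sum_nonneg fun i _ => sq_nonneg _)
  -- the dual certificate: `1` on `s`, and `ψ` rescaled to Euclidean norm `√k` off `s`
  let ω : ι → ℝ := fun i => if i ∈ s then 1 else Real.sqrt k * ψ i / T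
  have hω : ∀ i, |ω i| ≤ 1 := fun i => by
    by_cases hi : i ∈ s
    · simp [ω, hi]
    · simp only [ω, if_neg hi, abs_div, abs_of_nonneg hT]
      refine div_le_one_of_le₀ (abs_le_of_sq_le_sq ?_ hT) hT
      rw [mul_pow, Real.sq_sqrt (Nat.cast_nonneg k), hT2]
      exact htail i hi
  have hω₂ : ∑ i, ω i ^ 2 ≤ m := by
    rw [sum_eq_sum_add_sum_compl s (g := fun _ => 1) (h := fun i => k / T ^ 2 * ψ i ^ 2)
      (fun i hi => by simp [ω, hi])
      (fun i hi => by
        simp only [ω, if_neg hi, div_pow, mul_pow, Real.sq_sqrt (Nat.cast_nonneg k)]; ring),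
      ← Finset.mul_sum, ← hT2, ← hm]
    simp only [Finset.sum_const, nsmul_eq_mul, mul_one, Nat.cast_add]
    rcases eq_or_ne T 0 with h | h
    · simp [h]
    · rw [div_mul_cancel₀ _ (pow_ne_zero 2 h)]
  have hωψ : ∑ i, ω i * ψ i = ∑ i ∈ s, ψ i + Real.sqrt k * T := by
    rw [sum_eq_sum_add_sum_compl s (g := ψ) (h := fun i => Real.sqrt k / T * ψ i ^ 2)
      (fun i hi => by simp [ω, hi]) (fun i hi => by simp only [ω, if_neg hi]; ring),
      ← Finset.mul_sum, ← hT2]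
    rcases eq_or_ne T 0 with h | h
    · simp [h]
    · field_simp
  simpa [hωψ] using sum_mul_re_le_distNorm hω hω₂ fun i => (ψ i : ℂ)

theorem distNorm_eq_of_threshold (hk : 0 < k) (hm : s.card + k = m)
    (hψ : ∀ i ∈ s, 0 ≤ ψ i) (hhead : ∀ i ∈ s, ∑ j ∈ sᶜ, ψ j ^ 2 ≤ k * ψ i ^ 2)
    (htail : ∀ i ∉ s, k * ψ i ^ 2 ≤ ∑ j ∈ sᶜ, ψ j ^ 2) :
    distNorm m (fun i => (ψ i : ℂ)) =
      ∑ i ∈ s, ψ i + Real.sqrt k * Real.sqrt (∑ i ∈ sᶜ, ψ i ^ 2) :=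
  (distNorm_le_of_head_threshold hk hm hψ hhead).antisymm
    (le_distNorm_of_tail_threshold hm htail)

end Threshold

lemma mul_le_mul_of_one_div_sqrt_mul_sqrt_le {a b s t : ℝ} (ha : 0 < a) (hb : 0 < b)
    (ht : 0 ≤ t) (h : 1 / Real.sqrt a * Real.sqrt s ≤ 1 / Real.sqrt b * Real.sqrt t) :
    s * b ≤ t * a := by
  rwa [one_div_mul_eq_div, one_div_mul_eq_div, ← Real.sqrt_div' _ ha.le,
    ← Real.sqrt_div' _ hb.le, Real.sqrt_le_sqrt_iff (div_nonneg ht hb.le),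
    div_le_div_iff₀ ha hb] at h

section Sorted

variable {d : ℕ} (ψ : Fin d → ℝ)

/-- `tailSq ψ a` is the paper's `∑_{i=a+1}^d ψ_i²`: indices of `Fin d` start at `0`. -/
def tailSq (a : ℕ) : ℝ := ∑ i ∈ Finset.univ.filter (fun i : Fin d => a ≤ i.val), ψ i ^ 2

lemma tailSq_nonneg (a : ℕ) : 0 ≤ tailSq ψ a :=
  Finset.sum_nonneg fun i _ => sq_nonneg (ψ i)

lemma tailSq_eq_add {a : ℕ} (ha : a < d) : tailSq ψ a = ψ ⟨a, ha⟩ ^ 2 + tailSq ψ (a + 1) := by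
  have h : Finset.univ.filter (fun i : Fin d => a ≤ i.val)
      = insert ⟨a, ha⟩ (Finset.univ.filter (fun i : Fin d => a + 1 ≤ i.val)) := by
    ext i
    simp only [Finset.mem_filter, Finset.mem_univ, true_and, Finset.mem_insert, Fin.ext_iff]
    omega
  rw [tailSq, h, Finset.sum_insert (by simp)]
  rfl

variable {ψ} {m k : ℕ}

lemma tailSq_le_mul_sq_of_minimal (hψ : Antitone ψ) (hψ₀ : ∀ i, 0 ≤ ψ i) (hmd : m ≤ d)
    (hmin : ∀ l ∈ Finset.Icc 1 m, tailSq ψ (m - k) * l ≤ tailSq ψ (m - l) * k)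
    (i : Fin d) (hi : i.val < m - k) :
    tailSq ψ (m - k) ≤ k * ψ i ^ 2 := by
  obtain ⟨c, hc⟩ : ∃ c, m - k = c + 1 := ⟨m - k - 1, by omega⟩
  have hcd : c < d := by omega
  have h := hmin (k + 1) (Finset.mem_Icc.mpr ⟨by omega, by omega⟩)
  rw [show m - (k + 1) = c by omega, hc, Nat.cast_succ, tailSq_eq_add ψ hcd] at h
  have hψi : ψ ⟨c, hcd⟩ ^ 2 ≤ ψ i ^ 2 :=
    pow_le_pow_left₀ (hψ₀ _) (hψ (Fin.le_def.mpr (by simp only; omega))) 2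
  rw [hc]
  linarith [mul_le_mul_of_nonneg_left hψi (Nat.cast_nonneg k : (0 : ℝ) ≤ k)]

lemma mul_sq_le_tailSq_of_minimal (hψ : Antitone ψ) (hψ₀ : ∀ i, 0 ≤ ψ i)
    (hk : k ∈ Finset.Icc 1 m)
    (hmin : ∀ l ∈ Finset.Icc 1 m, tailSq ψ (m - k) * l ≤ tailSq ψ (m - l) * k)
    (i : Fin d) (hi : m - k ≤ i.val) :
    k * ψ i ^ 2 ≤ tailSq ψ (m - k) := by
  obtain ⟨hk₁, hkm⟩ := Finset.mem_Icc.mp hk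
  have hcd : m - k < d := lt_of_le_of_lt hi i.isLt
  have h : tailSq ψ (m - k) * (k - 1) ≤ tailSq ψ (m - k + 1) * k := by
    rcases Nat.lt_or_ge k 2 with hk2 | hk2
    · rw [show k = 1 by omega]
      simpa using tailSq_nonneg ψ _
    · have h := hmin (k - 1) (Finset.mem_Icc.mpr ⟨by omega, by omega⟩)
      rwa [show m - (k - 1) = m - k + 1 by omega, Nat.cast_sub (by omega), Nat.cast_one] at h
  rw [tailSq_eq_add ψ hcd] at h ⊢
  have hψi : ψ i ^ 2 ≤ ψ ⟨m - k, hcd⟩ ^ 2 := pow_le_pow_left₀ (hψ₀ _) (hψ (Fin.le_def.mpr hi)) 2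
  linarith [mul_le_mul_of_nonneg_left hψi (Nat.cast_nonneg k : (0 : ℝ) ≤ k)]

end Sorted

theorem stmt7_general {d : ℕ} (ψ : Fin d → ℝ) (hpos : ∀ i, 0 ≤ ψ i)
    (hsort : ∀ i j : Fin d, i ≤ j → ψ j ≤ ψ i)
    (m : ℕ) (hmd : m ≤ d)
    (k : ℕ) (hk : k ∈ Finset.Icc 1 m)
    (hmin : ∀ l ∈ Finset.Icc 1 m,
      (1 / Real.sqrt k) *
        Real.sqrt (∑ i ∈ Finset.univ.filter (fun i : Fin d => m - k ≤ i.val), (ψ i)^2) ≤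
      (1 / Real.sqrt l) *
        Real.sqrt (∑ i ∈ Finset.univ.filter (fun i : Fin d => m - l ≤ i.val), (ψ i)^2)) :
    distNorm m (fun i => (ψ i : ℂ)) =
      (∑ i ∈ Finset.univ.filter (fun i : Fin d => i.val < m - k), ψ i) +
      Real.sqrt k *
        Real.sqrt (∑ i ∈ Finset.univ.filter (fun i : Fin d => m - k ≤ i.val), (ψ i)^2) := by
  obtain ⟨hk₁, hkm⟩ := Finset.mem_Icc.mp hk
  have hratio (l : ℕ) (hl : l ∈ Finset.Icc 1 m) : tailSq ψ (m - k) * l ≤ tailSq ψ (m - l) * k :=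
    mul_le_mul_of_one_div_sqrt_mul_sqrt_le (Nat.cast_pos.mpr hk₁)
      (Nat.cast_pos.mpr (Finset.mem_Icc.mp hl).1) (tailSq_nonneg ψ _) (hmin l hl)
  set s := Finset.univ.filter (fun i : Fin d => i.val < m - k)
  have hcompl : sᶜ = Finset.univ.filter (fun i : Fin d => m - k ≤ i.val) := by
    ext i; simp [s]
  have hcard : s.card + k = m := by
    rw [Fin.card_filter_val_lt]; omega
  rw [← hcompl]
  exact distNorm_eq_of_threshold hk₁ hcard (fun i _ => hpos i)
    (fun i hi => hcompl ▸
      tailSq_le_mul_sq_of_minimal hsort hpos hmd hratio i (by simpa [s] using hi))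
    (fun i hi => hcompl ▸
      mul_sq_le_tailSq_of_minimal hsort hpos hk hratio i (by simpa [s] using hi))

theorem stmt7 {d : ℕ} (ψ : Fin d → ℝ) (hpos : ∀ i, 0 ≤ ψ i)
    (hsort : ∀ i j : Fin d, i ≤ j → ψ j ≤ ψ i)
    (m : ℕ) (hm : 1 ≤ m) (hmd : m ≤ d)
    (k : ℕ) (hk : k ∈ Finset.Icc 1 m)
    (hmin : ∀ l ∈ Finset.Icc 1 m,
      (1 / Real.sqrt k) *
        Real.sqrt (∑ i ∈ Finset.univ.filter (fun i : Fin d => m - k ≤ i.val), (ψ i)^2) ≤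
      (1 / Real.sqrt l) *
        Real.sqrt (∑ i ∈ Finset.univ.filter (fun i : Fin d => m - l ≤ i.val), (ψ i)^2)) :
    distNorm m (fun i => (ψ i : ℂ)) =
      (∑ i ∈ Finset.univ.filter (fun i : Fin d => i.val < m - k), ψ i) +
      Real.sqrt k *
        Real.sqrt (∑ i ∈ Finset.univ.filter (fun i : Fin d => m - k ≤ i.val), (ψ i)^2) :=
  stmt7_general ψ hpos hsort m hmd k hk hmin
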